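/- Let γ > 0 and a_n ≥ 0 with a_n ≤ c₂ n^{-γ} for n ≥ 1 and a_0 ≤ c₂. Then there exists K > 0 such that e^{-t} Σ_{n=0}^∞ (t^n/n!) a_n ≤ K t^{-γ} for all t ≥ 1. -/

import Mathlib

open Real Nat

/-!
Split the sum at `n = t/2`. For `n ≥ t/2` the hypothesis gives `aₙ ≤ c₂ (t/2)^{-γ}`, while for
`n < t/2` we only know `aₙ ≤ c₂ ≤ c₂ e^{t/2 - n}`. Hence `aₙ ≤ c₂ 2^γ t^{-γ} + c₂ e^{t/2} e^{-n}`
for every `n`, and averaging against the Poisson weights `e^{-t} tⁿ/n!` yields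
`c₂ 2^γ t^{-γ} + c₂ e^{-(1/2 - e^{-1}) t}`; the exponential term is `O(t^{-γ})` on `t ≥ 1`.
-/

lemma hasSum_pow_div_factorial (x : ℝ) : HasSum (fun n : ℕ => x ^ n / n !) (exp x) := by
  rw [exp_eq_exp_ℝ]
  exact NormedSpace.expSeries_div_hasSum_exp x

lemma exp_neg_mul_le_rpow_neg {c t : ℝ} (γ : ℝ) (hc : 0 < c) (ht : 1 ≤ t) :
    exp (-(c * t)) ≤ ⌈γ⌉₊ ! / c ^ ⌈γ⌉₊ * t ^ (-γ) := by
  set m := ⌈γ⌉₊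
  have ht₀ : 0 < t := one_pos.trans_le ht
  calc exp (-(c * t)) = (exp (c * t))⁻¹ := exp_neg _
    _ ≤ ((c * t) ^ m / m !)⁻¹ := by
        gcongr
        exact pow_div_factorial_le_exp _ (by positivity) m
    _ = m ! / c ^ m * t ^ (-(m : ℝ)) := by
        rw [rpow_neg ht₀.le, rpow_natCast, mul_pow]
        field_simp
    _ ≤ m ! / c ^ m * t ^ (-γ) := by
        gcongr
        exact Nat.le_ceil γ

lemma tsum_pow_div_factorial_mul_le {a : ℕ → ℝ} {t A B r : ℝ} (ht : 0 ≤ t)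
    (ha : ∀ n, 0 ≤ a n) (hle : ∀ n, a n ≤ A + B * r ^ n) :
    ∑' n : ℕ, t ^ n / n ! * a n ≤ A * exp t + B * exp (r * t) := by
  have hbound : HasSum (fun n : ℕ => t ^ n / n ! * (A + B * r ^ n))
      (A * exp t + B * exp (r * t)) := by
    refine (((hasSum_pow_div_factorial t).mul_left A).add
      ((hasSum_pow_div_factorial (r * t)).mul_left B)).congr_fun fun n => ?_
    rw [mul_pow]
    ring
  have hterm : ∀ n, t ^ n / n ! * a n ≤ t ^ n / n ! * (A + B * r ^ n) :=
    fun n => mul_le_mul_of_nonneg_left (hle n) (by positivity)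
  exact hasSum_le hterm
    (hbound.summable.of_nonneg_of_le (fun n => by have := ha n; positivity) hterm).hasSum hbound

lemma le_mul_rpow_neg_add_mul_exp {a : ℕ → ℝ} {γ c₂ t : ℝ} (hγ : 0 ≤ γ) (hc₂ : 0 ≤ c₂)
    (ht : 0 < t) (ha0 : a 0 ≤ c₂) (hup : ∀ n : ℕ, 1 ≤ n → a n ≤ c₂ * (n : ℝ) ^ (-γ))
    (n : ℕ) : a n ≤ c₂ * (t / 2) ^ (-γ) + c₂ * exp (t / 2) * exp (-1) ^ n := by
  have hexp : exp (t / 2) * exp (-1) ^ n = exp (t / 2 - n) := by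
    rw [← exp_nat_mul, ← exp_add]
    ring_nf
  rw [mul_assoc, hexp]
  by_cases hn : (n : ℝ) < t / 2
  · have hbdd : a n ≤ c₂ := by
      rcases Nat.eq_zero_or_pos n with rfl | hpos
      · exact ha0
      · calc a n ≤ c₂ * (n : ℝ) ^ (-γ) := hup n hpos
          _ ≤ c₂ * 1 := by
              gcongr
              exact rpow_le_one_of_one_le_of_nonpos (by exact_mod_cast hpos) (by linarith)
          _ = c₂ := mul_one c₂
    have hexp_ge : c₂ ≤ c₂ * exp (t / 2 - n) :=
      le_mul_of_one_le_right hc₂ (one_le_exp (by linarith))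
    have hrpow_nonneg : 0 ≤ c₂ * (t / 2) ^ (-γ) := by positivity
    linarith
  · push Not at hn
    have hpos : 0 < n := Nat.cast_pos.mp (by linarith : (0 : ℝ) < n)
    have hmono : c₂ * (n : ℝ) ^ (-γ) ≤ c₂ * (t / 2) ^ (-γ) :=
      mul_le_mul_of_nonneg_left (rpow_le_rpow_of_nonpos (by positivity) hn (by linarith)) hc₂
    have hexp_nonneg : 0 ≤ c₂ * exp (t / 2 - n) := by positivity
    linarith [hup n hpos]

/-- If `0 ≤ a_n`, `a_0 ≤ c₂` and `a_n ≤ c₂ n^{-γ}` for `n ≥ 1` (`γ > 0`), then there is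
`K > 0` with `e^{-t} Σ_n (t^n/n!) a_n ≤ K t^{-γ}` for all `t ≥ 1`. -/
theorem stmt17 (γ : ℝ) (hγ : 0 < γ) (c₂ : ℝ) (hc₂ : 0 < c₂)
    (a : ℕ → ℝ) (hann : ∀ n, 0 ≤ a n) (ha0 : a 0 ≤ c₂)
    (hup : ∀ n : ℕ, 1 ≤ n → a n ≤ c₂ * (n : ℝ) ^ (-γ)) :
    ∃ K : ℝ, 0 < K ∧ ∀ t : ℝ, 1 ≤ t →
      Real.exp (-t) * ∑' n : ℕ, t ^ n / (n.factorial : ℝ) * a n ≤ K * t ^ (-γ) := by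
  set c := 1 / 2 - exp (-1)
  have hc : 0 < c := sub_pos.mpr exp_neg_one_lt_half
  refine ⟨c₂ * 2 ^ γ + c₂ * (⌈γ⌉₊ ! / c ^ ⌈γ⌉₊), by positivity, fun t ht => ?_⟩
  have ht₀ : 0 < t := one_pos.trans_le ht
  have hsum := tsum_pow_div_factorial_mul_le ht₀.le hann
    (le_mul_rpow_neg_add_mul_exp hγ.le hc₂.le ht₀ ha0 hup)
  calc exp (-t) * ∑' n : ℕ, t ^ n / n ! * a n
      ≤ exp (-t) * (c₂ * (t / 2) ^ (-γ) * exp t + c₂ * exp (t / 2) * exp (exp (-1) * t)) :=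
        mul_le_mul_of_nonneg_left hsum (exp_nonneg _)
    _ = c₂ * 2 ^ γ * t ^ (-γ) + c₂ * exp (-(c * t)) := by
        have hdecay : exp (-t) * exp (t / 2) * exp (exp (-1) * t) = exp (-(c * t)) := by
          rw [← exp_add, ← exp_add]
          congr 1
          simp only [c]
          ring
        have hcancel : exp (-t) * exp t = 1 := by rw [← exp_add, neg_add_cancel, exp_zero]
        rw [div_rpow ht₀.le two_pos.le, rpow_neg two_pos.le, div_inv_eq_mul]
        linear_combination c₂ * 2 ^ γ * t ^ (-γ) * hcancel + c₂ * hdecay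
    _ ≤ c₂ * 2 ^ γ * t ^ (-γ) + c₂ * (⌈γ⌉₊ ! / c ^ ⌈γ⌉₊ * t ^ (-γ)) := by
        gcongr
        exact exp_neg_mul_le_rpow_neg γ hc ht
    _ = (c₂ * 2 ^ γ + c₂ * (⌈γ⌉₊ ! / c ^ ⌈γ⌉₊)) * t ^ (-γ) := by ring
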